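/- For the complete bipartite graph K_{p,q} with 2 ≤ p ≤ q, the set of negative cycle vectors of all signings of K_{p,q} spans a real vector space of dimension p - 1. -/

import Mathlib

/-!
A signing is a set `N` of negative edges, and a cycle `C` is negative iff `#(C ∩ N)` is odd,
i.e. iff the character `N ↦ (-1) ^ #(C ∩ N)` of the group of edge sets takes the value `-1`.
By orthogonality of these characters, pairing the negative cycle vectors with the character of
one fixed `2k`-cycle `S` (summing over all signings) isolates `S`: the result is a nonzero
multiple of the unit vector at length `2k`. Since `K_{p,q}` contains a `2k`-cycle for every
`2 ≤ k ≤ p ≤ q`, every unit vector lies in the span.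
-/

open Finset

/-- The set of edge sets of cycles of length `l` in `G`, as unoriented cycle subgraphs. -/
def cycleSets {V : Type*} [DecidableEq V] (G : SimpleGraph V) (l : ℕ) : Set (Finset (Sym2 V)) :=
  {C | ∃ (v : V) (w : G.Walk v v), w.IsCycle ∧ w.length = l ∧ w.edges.toFinset = C}

/-- The number of cycles of length `l` in `G`. -/
noncomputable def cycleCount {V : Type*} [DecidableEq V] (G : SimpleGraph V) (l : ℕ) : ℕ :=
  (cycleSets G l).ncard

/-- The number of negative `l`-cycles of `G` signed with negative edge set `N`:
cycles meeting `N` in an odd number of edges. -/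
noncomputable def negCycleCount {V : Type*} [DecidableEq V] (G : SimpleGraph V)
    (N : Finset (Sym2 V)) (l : ℕ) : ℕ :=
  {C | C ∈ cycleSets G l ∧ Odd (C ∩ N).card}.ncard

/-- The number of negative `l`-cycles of `G` with edge sign function `σ`. -/
noncomputable def negCycleCountS {V : Type*} [DecidableEq V] (G : SimpleGraph V)
    (σ : Sym2 V → ℤ) (l : ℕ) : ℕ :=
  {C | C ∈ cycleSets G l ∧ ∏ e ∈ C, σ e = -1}.ncard

/-- A set of edges is a matching: its members are pairwise vertex-disjoint. -/
def IsMatchingSet {V : Type*} (S : Finset (Sym2 V)) : Prop :=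
  ∀ e ∈ S, ∀ f ∈ S, e ≠ f → ∀ v : V, v ∈ e → v ∉ f

/-- The sign multiplier on edges produced by switching at the vertex set `X`. -/
def switchSign {V : Type*} [DecidableEq V] (X : Finset V) : Sym2 V → ℤ :=
  Sym2.lift ⟨fun a b => (if a ∈ X then (-1 : ℤ) else 1) * (if b ∈ X then (-1 : ℤ) else 1),
    fun _ _ => mul_comm _ _⟩

/-- The set of (potential) edges with exactly one endpoint in `X`. -/
def crossEdges {V : Type*} [Fintype V] [DecidableEq V] (X : Finset V) : Finset (Sym2 V) :=
  (X ×ˢ Xᶜ).image fun p => s(p.1, p.2)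

section ParityCharacters

variable {α : Type*} [DecidableEq α]

theorem neg_one_pow_card_inter_eq_prod (S N : Finset α) :
    (-1 : ℝ) ^ #(S ∩ N) = ∏ e ∈ N, if e ∈ S then -1 else 1 := by
  rw [prod_ite_mem, prod_const, inter_comm]

variable [Fintype α]

theorem sum_neg_one_pow_card_inter_mul (S C : Finset α) :
    ∑ N : Finset α, (-1 : ℝ) ^ #(S ∩ N) * (-1) ^ #(C ∩ N) =
      if S = C then 2 ^ Fintype.card α else 0 := by
  set a : α → ℝ := fun e => (if e ∈ S then -1 else 1) * (if e ∈ C then -1 else 1)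
  have hsum : ∑ N : Finset α, (-1 : ℝ) ^ #(S ∩ N) * (-1) ^ #(C ∩ N) = ∏ e, (1 + a e) := by
    simp only [prod_one_add, powerset_univ, neg_one_pow_card_inter_eq_prod, a, prod_mul_distrib]
  rw [hsum]
  split_ifs with h
  · subst h
    simp [a, apply_ite (fun x : ℝ => x * x), one_add_one_eq_two]
  · obtain ⟨e, he⟩ : ∃ e, ¬(e ∈ S ↔ e ∈ C) := by
      by_contra! h'
      exact h (ext h')
    exact prod_eq_zero (mem_univ e) (by by_cases e ∈ S <;> simp_all [a])

theorem sum_neg_one_pow_card_inter {S : Finset α} (hS : S.Nonempty) :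
    ∑ N : Finset α, (-1 : ℝ) ^ #(S ∩ N) = 0 := by
  simpa [hS.ne_empty] using sum_neg_one_pow_card_inter_mul S ∅

theorem sum_neg_one_pow_card_inter_mul_card_filter_odd (𝒞 : Finset (Finset α)) {S : Finset α}
    (hS : S.Nonempty) :
    ∑ N : Finset α, (-1 : ℝ) ^ #(S ∩ N) * #{C ∈ 𝒞 | Odd #(C ∩ N)} =
      if S ∈ 𝒞 then -2 ^ Fintype.card α / 2 else 0 := by
  have hodd : ∀ m : ℕ, (if Odd m then (1 : ℝ) else 0) = (1 - (-1) ^ m) / 2 := fun m => by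
    rcases Nat.even_or_odd m with h | h <;> simp [h, h.neg_one_pow, Nat.not_odd_iff_even]
  have hinner : ∀ C : Finset α,
      ∑ N : Finset α, (-1 : ℝ) ^ #(S ∩ N) * ((1 - (-1) ^ #(C ∩ N)) / 2) =
        if S = C then -2 ^ Fintype.card α / 2 else 0 := fun C => by
    simp only [← mul_div_assoc, ← sum_div, mul_sub, mul_one, sum_sub_distrib,
      sum_neg_one_pow_card_inter hS, sum_neg_one_pow_card_inter_mul]
    split_ifs <;> ring
  simp only [card_filter, Nat.cast_sum, Nat.cast_ite, Nat.cast_one, Nat.cast_zero, hodd, mul_sum]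
  rw [sum_comm, sum_congr rfl fun C _ => hinner C, sum_ite_eq]

end ParityCharacters

open SimpleGraph

section NegativeCycleVectors

variable {V : Type*} [DecidableEq V] {G : SimpleGraph V}

theorem card_of_mem_cycleSets {l : ℕ} {C : Finset (Sym2 V)} (hC : C ∈ cycleSets G l) :
    #C = l := by
  obtain ⟨v, w, hw, rfl, rfl⟩ := hC
  rw [List.toFinset_card_of_nodup hw.isTrail.edges_nodup, Walk.length_edges]

variable [Fintype V]

theorem negCycleCount_eq_card_filter (N : Finset (Sym2 V)) (l : ℕ) :
    negCycleCount G N l = #{C ∈ (cycleSets G l).toFinite.toFinset | Odd #(C ∩ N)} := by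
  rw [negCycleCount, ← Set.ncard_coe_finset]
  congr 1
  ext C
  simp

theorem single_mem_span_negCycleCount {ι : Type*} [DecidableEq ι] {len : ι → ℕ}
    (hlen : Function.Injective len) {i : ι} (hi : (cycleSets G (len i)).Nonempty) :
    Pi.single i 1 ∈ Submodule.span ℝ
      (Set.range fun N : Finset (Sym2 V) => fun j => (negCycleCount G N (len j) : ℝ)) := by
  obtain ⟨S, hS⟩ := hi
  have hSne : S.Nonempty := by
    obtain ⟨v, w, hw, hwlen, rfl⟩ := id hS
    exact card_pos.mp (by rw [card_of_mem_cycleSets hS, ← hwlen]; linarith [hw.three_le_length])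
  have hSlen : ∀ j, S ∈ cycleSets G (len j) ↔ j = i := fun j =>
    ⟨fun h => hlen (by rw [← card_of_mem_cycleSets h, card_of_mem_cycleSets hS]),
      by rintro rfl; exact hS⟩
  set c : ℝ := -2 ^ Fintype.card (Sym2 V) / 2
  have hc : c ≠ 0 := div_ne_zero (neg_ne_zero.2 (pow_ne_zero _ two_ne_zero)) two_ne_zero
  have hsum : ∑ N : Finset (Sym2 V), (-1 : ℝ) ^ #(S ∩ N) •
      (fun j => (negCycleCount G N (len j) : ℝ)) = c • Pi.single i 1 := by
    funext j
    simp only [Finset.sum_apply, Pi.smul_apply, smul_eq_mul, negCycleCount_eq_card_filter]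
    rw [sum_neg_one_pow_card_inter_mul_card_filter_odd _ hSne]
    simp only [Set.Finite.mem_toFinset, hSlen]
    by_cases hj : j = i <;> simp [hj, c]
  rw [← Submodule.smul_mem_iff _ hc, ← hsum]
  exact Submodule.sum_mem _ fun N _ => Submodule.smul_mem _ _ (Submodule.subset_span ⟨N, rfl⟩)

theorem finrank_span_negCycleCount {ι : Type*} [Fintype ι] [DecidableEq ι] {len : ι → ℕ}
    (hlen : Function.Injective len) (hcyc : ∀ i, (cycleSets G (len i)).Nonempty) :
    Module.finrank ℝ (Submodule.span ℝ
      (Set.range fun N : Finset (Sym2 V) => fun j => (negCycleCount G N (len j) : ℝ))) =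
      Fintype.card ι := by
  have hspan : Submodule.span ℝ
      (Set.range fun N : Finset (Sym2 V) => fun j => (negCycleCount G N (len j) : ℝ)) = ⊤ := by
    rw [eq_top_iff, ← (Pi.basisFun ℝ ι).span_eq, Submodule.span_le, Set.range_subset_iff]
    intro i
    simpa using single_mem_span_negCycleCount hlen (hcyc i)
  rw [hspan, finrank_top, Module.finrank_fintype_fun_eq_card]

end NegativeCycleVectors

theorem cycleGraph_isContained_completeBipartiteGraph (k : ℕ) :
    cycleGraph (2 * k) ⊑ completeBipartiteGraph (Fin k) (Fin k) := by
  let f : Fin (2 * k) → Fin k ⊕ Fin k := fun j =>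
    if (j : ℕ) % 2 = 0 then .inl ⟨j / 2, by omega⟩ else .inr ⟨j / 2, by omega⟩
  have hf : Function.Injective f := by
    intro a b hab
    have := Nat.div_add_mod a 2
    have := Nat.div_add_mod b 2
    simp only [f] at hab
    split_ifs at hab <;> simp at hab <;> omega
  refine ⟨Hom.toCopy ⟨f, fun {a b} hab => ?_⟩ hf⟩
  have := (cycleGraph.bicoloring_of_even _ (even_two_mul k)).valid hab
  simp only [cycleGraph.bicoloring_of_even, Coloring.mk] at this
  simp only [f]
  split_ifs <;> simp_all

theorem completeBipartiteGraph_isContained_of_le {k l p q : ℕ} (hkp : k ≤ p) (hlq : l ≤ q) :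
    completeBipartiteGraph (Fin k) (Fin l) ⊑ completeBipartiteGraph (Fin p) (Fin q) :=
  ⟨Hom.toCopy ⟨Sum.map (Fin.castLE hkp) (Fin.castLE hlq), fun {a b} hab => by
    rcases a with a | a <;> rcases b with b | b <;> simp_all⟩
    (Sum.map_injective.2 ⟨Fin.castLE_injective hkp, Fin.castLE_injective hlq⟩)⟩

theorem cycleSets_completeBipartiteGraph_nonempty {k p q : ℕ} (hk : 2 ≤ k) (hkp : k ≤ p)
    (hkq : k ≤ q) : (cycleSets (completeBipartiteGraph (Fin p) (Fin q)) (2 * k)).Nonempty := by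
  obtain ⟨v, w, hw, hwlen⟩ := (cycleGraph_isContained_iff (by omega)).1
    ((cycleGraph_isContained_completeBipartiteGraph k).trans
      (completeBipartiteGraph_isContained_of_le hkp hkq))
  exact ⟨_, v, w, hw, hwlen, rfl⟩

theorem stmt11_general (p q : ℕ) (hpq : p ≤ q) :
    Module.finrank ℝ (Submodule.span ℝ
      (Set.range fun N : Finset (Sym2 (Fin p ⊕ Fin q)) =>
        fun i : Fin (p - 1) =>
          (negCycleCount (completeBipartiteGraph (Fin p) (Fin q)) N (2 * ((i : ℕ) + 2)) : ℝ)))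
      = p - 1 := by
  rw [finrank_span_negCycleCount (len := fun i : Fin (p - 1) => 2 * ((i : ℕ) + 2))
    (fun i j h => Fin.ext (by simpa using h))
    (fun i => cycleSets_completeBipartiteGraph_nonempty le_add_self (by omega) (by omega)),
    Fintype.card_fin]

/-- The negative cycle vectors of all signings of `K_{p,q}` (`2 ≤ p ≤ q`),
indexed by the cycle spectrum `{4, 6, …, 2p}`, span a space of dimension `p - 1`. -/
theorem stmt11 (p q : ℕ) (hp : 2 ≤ p) (hpq : p ≤ q) :
    Module.finrank ℝ (Submodule.span ℝ
      (Set.range fun N : Finset (Sym2 (Fin p ⊕ Fin q)) =>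
        fun i : Fin (p - 1) =>
          (negCycleCount (completeBipartiteGraph (Fin p) (Fin q)) N (2 * ((i : ℕ) + 2)) : ℝ)))
      = p - 1 :=
  stmt11_general p q hpq
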